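/- Let U_P ⊆ U_R be pattern groups on {1,2,…,n} over F_q, and let I = {u ∈ U_R : u_{ij} ≠ 0 for i ≠ j implies i <_R j and not i <_P j}. If (l−1)(u−1) = 0 (matrix product) for all l ∈ I and u ∈ U_R, then SInd_{U_P}^{U_R}(χ) = Ind_{U_P}^{U_R}(χ) for every superclass function χ of U_P. -/

import Mathlib

/-!
Write `z = xy`. The hypothesis on `I` says that `z` differs from its `P`-part `h ∈ U_P` by an
element annihilating `n_R` from the left, so with `a = y⁻¹(g − 1)y ∈ n_R` we get
`x(g − 1)y = z a = h a`. Since `h a + 1` and `a + 1 = y⁻¹gy` lie in the same superclass of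
`U_P` (or both outside `U_P`), every summand `χ̇(x(g − 1)y + 1)` of the superinduction equals
the summand `χ̇(y⁻¹gy)` of the induction, independently of `x`; averaging over `x` gives the
theorem.
-/

open scoped Classical

noncomputable section

def setFinset {α : Type*} [Fintype α] (S : Set α) : Finset α :=
  Finset.univ.filter (· ∈ S)

/-- A strict partial order on `{1,…,n}` that is a subrelation of the usual order. -/
def IsPatternOrder {n : ℕ} (P : Fin n → Fin n → Prop) : Prop :=
  (∀ i j, P i j → i < j) ∧ ∀ i j k, P i j → P j k → P i k

/-- The pattern group `U_P` of unipotent upper-triangular matrices supported on `P`. -/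
def patternGroup (F : Type*) [Field F] {n : ℕ} (P : Fin n → Fin n → Prop) :
    Set (Matrix (Fin n) (Fin n) F) :=
  {u | (∀ i, u i i = 1) ∧ ∀ i j, i ≠ j → u i j ≠ 0 → P i j}

/-- `χ` is constant on the superclasses of `G`: `u ~ v` iff `v − 1 ∈ G(u−1)G`. -/
def IsSuperclassFn {A : Type*} [Ring A] (G : Set A) (χ : A → ℂ) : Prop :=
  ∀ u ∈ G, ∀ v ∈ G, (∃ x ∈ G, ∃ y ∈ G, v - 1 = x * (u - 1) * y) → χ u = χ v

/-- Superinduction `SInd_H^G(χ)(g) = (1/(|G||H|)) Σ_{x,y∈G} χ̇(x(g−1)y + 1)`. -/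
def SInd {A : Type*} [Ring A] [Fintype A] (G H : Set A) (χ : A → ℂ) (g : A) : ℂ :=
  (((setFinset G).card : ℂ) * ((setFinset H).card : ℂ))⁻¹ *
    ∑ x ∈ setFinset G, ∑ y ∈ setFinset G,
      if x * (g - 1) * y + 1 ∈ H then χ (x * (g - 1) * y + 1) else 0

/-- Induction `Ind_H^G(χ)(g) = (1/|H|) Σ_{y∈G} χ̇(y⁻¹ g y)`. -/
def Ind {A : Type*} [Ring A] [Fintype A] (G H : Set A) (χ : A → ℂ) (g : A) : ℂ :=
  ((setFinset H).card : ℂ)⁻¹ *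
    ∑ y ∈ setFinset G,
      if Ring.inverse y * g * y ∈ H then χ (Ring.inverse y * g * y) else 0

/-- The set `I` of matrices supported on the relations of `R` that are not in `P`. -/
def ISet (F : Type*) [Field F] {n : ℕ} (R P : Fin n → Fin n → Prop) :
    Set (Matrix (Fin n) (Fin n) F) :=
  {u | (∀ i, u i i = 1) ∧ ∀ i j, i ≠ j → u i j ≠ 0 → R i j ∧ ¬ P i j}

open Finset

section AlgebraGroup

variable {A : Type*} [Ring A]

def algebraGroup (N : NonUnitalSubring A) : Set A :=
  {u | u - 1 ∈ N}

variable {N : NonUnitalSubring A} {u v m : A}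

theorem mem_algebraGroup : u ∈ algebraGroup N ↔ u - 1 ∈ N :=
  Iff.rfl

theorem add_one_mem_algebraGroup : m + 1 ∈ algebraGroup N ↔ m ∈ N := by
  rw [mem_algebraGroup, add_sub_cancel_right]

theorem one_mem_algebraGroup : (1 : A) ∈ algebraGroup N := by
  rw [mem_algebraGroup, sub_self]
  exact zero_mem N

theorem mul_mem_left_of_mem_algebraGroup (hu : u ∈ algebraGroup N) (hm : m ∈ N) :
    u * m ∈ N := by
  rw [show u * m = (u - 1) * m + m by noncomm_ring]
  exact add_mem (mul_mem (mem_algebraGroup.1 hu) hm) hm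

theorem mul_mem_right_of_mem_algebraGroup (hm : m ∈ N) (hu : u ∈ algebraGroup N) :
    m * u ∈ N := by
  rw [show m * u = m * (u - 1) + m by noncomm_ring]
  exact add_mem (mul_mem hm (mem_algebraGroup.1 hu)) hm

theorem mul_mem_algebraGroup (hu : u ∈ algebraGroup N) (hv : v ∈ algebraGroup N) :
    u * v ∈ algebraGroup N := by
  rw [mem_algebraGroup, show u * v - 1 = u * (v - 1) + (u - 1) by noncomm_ring]
  exact add_mem (mul_mem_left_of_mem_algebraGroup hu (mem_algebraGroup.1 hv))
    (mem_algebraGroup.1 hu)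

theorem pow_succ_mem_of_mem (hm : m ∈ N) : ∀ k : ℕ, m ^ (k + 1) ∈ N
  | 0 => by rwa [zero_add, pow_one]
  | k + 1 => by
    rw [pow_succ]
    exact mul_mem (pow_succ_mem_of_mem hm k) hm

theorem isUnit_of_mem_algebraGroup (hN : ∀ m ∈ N, IsNilpotent m) (hu : u ∈ algebraGroup N) :
    IsUnit u := by
  simpa using (hN _ (mem_algebraGroup.1 hu)).isUnit_add_one

theorem inverse_mem_algebraGroup (hN : ∀ m ∈ N, IsNilpotent m) (hu : u ∈ algebraGroup N) :
    Ring.inverse u ∈ algebraGroup N := by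
  set x := 1 - u
  have hx : x ∈ N := by simpa [x] using neg_mem (mem_algebraGroup.1 hu)
  obtain ⟨k, hk⟩ := hN x hx
  -- `u = 1 - x` with `x ^ (k + 1) = 0`, so the geometric series in `x` inverts `u`
  have hgeom : (∑ i ∈ range (k + 1), x ^ i) * u = 1 := by
    rw [show u = 1 - x by simp [x], geom_sum_mul_neg, pow_succ, hk, zero_mul, sub_zero]
  have hinv : Ring.inverse u = ∑ i ∈ range (k + 1), x ^ i := by
    rw [← one_mul (Ring.inverse u), ← hgeom,
      Ring.mul_inverse_cancel_right _ _ (isUnit_of_mem_algebraGroup hN hu)]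
  rw [hinv, mem_algebraGroup, sum_range_succ', pow_zero, add_sub_cancel_right]
  exact sum_mem fun i _ => pow_succ_mem_of_mem hx i

theorem mul_mem_iff_of_mem_algebraGroup (hN : ∀ m ∈ N, IsNilpotent m)
    (hu : u ∈ algebraGroup N) : u * m ∈ N ↔ m ∈ N := by
  refine ⟨fun hum => ?_, mul_mem_left_of_mem_algebraGroup hu⟩
  rw [← Ring.inverse_mul_cancel_left _ m (isUnit_of_mem_algebraGroup hN hu)]
  exact mul_mem_left_of_mem_algebraGroup (inverse_mem_algebraGroup hN hu) hum

theorem IsSuperclassFn.indicator_mul_add_one (hN : ∀ m ∈ N, IsNilpotent m) {χ : A → ℂ}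
    (hχ : IsSuperclassFn (algebraGroup N) χ) {h : A} (hh : h ∈ algebraGroup N) (a : A) :
    (algebraGroup N).indicator χ (h * a + 1) = (algebraGroup N).indicator χ (a + 1) := by
  by_cases ha : a ∈ N
  · have hha : h * a ∈ N := mul_mem_left_of_mem_algebraGroup hh ha
    rw [Set.indicator_of_mem (add_one_mem_algebraGroup.2 hha),
      Set.indicator_of_mem (add_one_mem_algebraGroup.2 ha)]
    exact (hχ _ (add_one_mem_algebraGroup.2 ha) _ (add_one_mem_algebraGroup.2 hha)
      ⟨h, hh, 1, one_mem_algebraGroup, by noncomm_ring⟩).symm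
  · have hha : h * a ∉ N := (mul_mem_iff_of_mem_algebraGroup hN hh).not.2 ha
    rw [Set.indicator_of_notMem (add_one_mem_algebraGroup.not.2 hha),
      Set.indicator_of_notMem (add_one_mem_algebraGroup.not.2 ha)]

theorem indicator_mul_sub_one_mul_add_one_eq {NP NR : NonUnitalSubring A}
    (hNP : ∀ m ∈ NP, IsNilpotent m) (hNR : ∀ m ∈ NR, IsNilpotent m)
    (hsplit : ∀ z ∈ algebraGroup NR, ∃ h ∈ algebraGroup NP, ∀ m ∈ NR, (z - h) * m = 0)
    {χ : A → ℂ} (hχ : IsSuperclassFn (algebraGroup NP) χ) {g x y : A}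
    (hg : g ∈ algebraGroup NR) (hx : x ∈ algebraGroup NR) (hy : y ∈ algebraGroup NR) :
    (algebraGroup NP).indicator χ (x * (g - 1) * y + 1) =
      (algebraGroup NP).indicator χ (Ring.inverse y * g * y) := by
  have hyu := isUnit_of_mem_algebraGroup hNR hy
  set a := Ring.inverse y * (g - 1) * y
  have ha : a ∈ NR := mul_mem_right_of_mem_algebraGroup
    (mul_mem_left_of_mem_algebraGroup (inverse_mem_algebraGroup hNR hy) (mem_algebraGroup.1 hg)) hy
  obtain ⟨h, hh, hann⟩ := hsplit (x * y) (mul_mem_algebraGroup hx hy)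
  have hxgy : x * (g - 1) * y = h * a :=
    calc x * (g - 1) * y = x * y * a := by
          simp only [a, ← mul_assoc, Ring.mul_inverse_cancel_right _ _ hyu]
      _ = (x * y - h) * a + h * a := by noncomm_ring
      _ = h * a := by rw [hann a ha, zero_add]
  have hconj : Ring.inverse y * g * y = a + 1 := by
    simp only [a, mul_sub, sub_mul, mul_one, Ring.inverse_mul_cancel _ hyu, sub_add_cancel]
  rw [hxgy, hconj]
  exact hχ.indicator_mul_add_one hNP hh a

end AlgebraGroup

theorem SInd_eq_Ind_of_forall_indicator_eq {A : Type*} [Ring A] [Fintype A] {G H : Set A}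
    {χ : A → ℂ} {g : A} (hG : G.Nonempty)
    (hterm : ∀ x ∈ G, ∀ y ∈ G,
      H.indicator χ (x * (g - 1) * y + 1) = H.indicator χ (Ring.inverse y * g * y)) :
    SInd G H χ g = Ind G H χ g := by
  have hcard : ((setFinset G).card : ℂ) ≠ 0 := by
    obtain ⟨x, hx⟩ := hG
    exact Nat.cast_ne_zero.2 (card_ne_zero_of_mem (mem_filter.2 ⟨mem_univ x, hx⟩))
  have hsum : ∑ x ∈ setFinset G, ∑ y ∈ setFinset G, H.indicator χ (x * (g - 1) * y + 1) =
      (setFinset G).card * ∑ y ∈ setFinset G, H.indicator χ (Ring.inverse y * g * y) := by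
    rw [← nsmul_eq_mul, ← sum_const]
    exact sum_congr rfl fun x hx => sum_congr rfl fun y hy =>
      hterm x (mem_filter.1 hx).2 y (mem_filter.1 hy).2
  simp only [SInd, Ind, ← Set.indicator_apply, hsum]
  field_simp

theorem Matrix.pow_apply_eq_zero_of_lt_add {K : Type*} [Semiring K] {n : ℕ}
    {m : Matrix (Fin n) (Fin n) K} (hm : ∀ i j, j ≤ i → m i j = 0) :
    ∀ (k : ℕ) (i j : Fin n), (j : ℕ) < i + k → (m ^ k) i j = 0
  | 0, i, j, h => by
    rw [pow_zero, Matrix.one_apply_ne]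
    rintro rfl
    omega
  | k + 1, i, j, h => by
    rw [pow_succ, Matrix.mul_apply]
    refine sum_eq_zero fun t _ => ?_
    by_cases ht : (t : ℕ) < i + k
    · rw [Matrix.pow_apply_eq_zero_of_lt_add hm k i t ht, zero_mul]
    · rw [hm t j (Fin.le_def.2 (by omega)), mul_zero]

theorem Matrix.isNilpotent_of_forall_le_eq_zero {K : Type*} [Semiring K] {n : ℕ}
    {m : Matrix (Fin n) (Fin n) K} (hm : ∀ i j, j ≤ i → m i j = 0) : IsNilpotent m :=
  ⟨n, Matrix.ext fun i j => Matrix.pow_apply_eq_zero_of_lt_add hm n i j (by omega)⟩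

def patternAlgebra (K : Type*) [Ring K] {ι : Type*} [Fintype ι] (P : ι → ι → Prop)
    (hP : ∀ i j k, P i j → P j k → P i k) : NonUnitalSubring (Matrix ι ι K) where
  carrier := {m | ∀ i j, m i j ≠ 0 → P i j}
  zero_mem' _ _ h := absurd rfl h
  add_mem' {a b} ha hb i j h := by
    by_cases hai : a i j = 0
    · exact hb i j (by simpa [hai] using h)
    · exact ha i j hai
  neg_mem' {a} ha i j h := ha i j (by simpa using h)
  mul_mem' {a b} ha hb i j h := by
    obtain ⟨k, -, hk⟩ := exists_ne_zero_of_sum_ne_zero h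
    exact hP i k j (ha i k (left_ne_zero_of_mul hk)) (hb k j (right_ne_zero_of_mul hk))

section Pattern

variable {F : Type*} [Field F] {n : ℕ} {P R : Fin n → Fin n → Prop}

theorem isNilpotent_of_mem_patternAlgebra (hP : IsPatternOrder P) {m : Matrix (Fin n) (Fin n) F}
    (hm : m ∈ patternAlgebra F P hP.2) : IsNilpotent m :=
  Matrix.isNilpotent_of_forall_le_eq_zero fun i j hji => by
    by_contra h
    exact not_lt.2 hji (hP.1 i j (hm i j h))

theorem patternGroup_eq_algebraGroup (hP : IsPatternOrder P) :
    patternGroup F P = algebraGroup (patternAlgebra F P hP.2) := by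
  ext u
  constructor
  · rintro ⟨hdiag, hoff⟩ i j h
    obtain rfl | hij := eq_or_ne i j
    · simp [hdiag] at h
    · exact hoff i j hij (by simpa [Matrix.one_apply_ne hij] using h)
  · intro hu
    refine ⟨fun i => ?_, fun i j hij h => hu i j (by simpa [Matrix.one_apply_ne hij] using h)⟩
    by_contra h
    exact lt_irrefl i (hP.1 i i (hu i i (by simpa [sub_eq_zero] using h)))

theorem exists_mem_patternGroup_sub_add_one_mem_ISet {z : Matrix (Fin n) (Fin n) F}
    (hz : z ∈ patternGroup F R) : ∃ h ∈ patternGroup F P, z - h + 1 ∈ ISet F R P := by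
  set h : Matrix (Fin n) (Fin n) F := Matrix.of fun i j => if i = j ∨ P i j then z i j else 0
  refine ⟨h, ⟨fun i => by simp [h, hz.1 i], fun i j hij hne => ?_⟩,
    ⟨fun i => by simp [h], fun i j hij hne => ?_⟩⟩
  · by_contra hp
    simp [h, hij, hp] at hne
  · by_cases hp : P i j
    · simp [h, hij, hp] at hne
    · exact ⟨hz.2 i j hij (by simpa [h, hij, hp] using hne), hp⟩

end Pattern

theorem sind_eq_ind_of_coset_representatives_annihilating_general
    {n : ℕ} (F : Type*) [Field F] [Fintype F]
    (P R : Fin n → Fin n → Prop)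
    (hP : IsPatternOrder P) (hR : IsPatternOrder R)
    (hzero : ∀ l ∈ ISet F R P, ∀ u ∈ patternGroup F R, (l - 1) * (u - 1) = 0) :
    ∀ χ : Matrix (Fin n) (Fin n) F → ℂ, IsSuperclassFn (patternGroup F P) χ →
      ∀ g ∈ patternGroup F R,
        SInd (patternGroup F R) (patternGroup F P) χ g =
          Ind (patternGroup F R) (patternGroup F P) χ g := by
  intro χ hχ g hg
  have hsplit : ∀ z ∈ patternGroup F R, ∃ h ∈ patternGroup F P,
      ∀ m, m + 1 ∈ patternGroup F R → (z - h) * m = 0 := fun z hz => by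
    obtain ⟨h, hh, hl⟩ := exists_mem_patternGroup_sub_add_one_mem_ISet hz
    exact ⟨h, hh, fun m hm => by simpa using hzero _ hl _ hm⟩
  rw [patternGroup_eq_algebraGroup hP] at hχ hsplit ⊢
  rw [patternGroup_eq_algebraGroup hR] at hg hsplit ⊢
  refine SInd_eq_Ind_of_forall_indicator_eq ⟨1, one_mem_algebraGroup⟩ fun x hx y hy =>
    indicator_mul_sub_one_mul_add_one_eq (fun _ => isNilpotent_of_mem_patternAlgebra hP)
      (fun _ => isNilpotent_of_mem_patternAlgebra hR) (fun z hz => ?_) hχ hg hx hy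
  obtain ⟨h, hh, hann⟩ := hsplit z hz
  exact ⟨h, hh, fun m hm => hann m (add_one_mem_algebraGroup.2 hm)⟩

theorem sind_eq_ind_of_coset_representatives_annihilating
    {n : ℕ} (F : Type*) [Field F] [Fintype F]
    (P R : Fin n → Fin n → Prop)
    (hP : IsPatternOrder P) (hR : IsPatternOrder R)
    (hPR : ∀ i j, P i j → R i j)
    (hzero : ∀ l ∈ ISet F R P, ∀ u ∈ patternGroup F R, (l - 1) * (u - 1) = 0) :
    ∀ χ : Matrix (Fin n) (Fin n) F → ℂ, IsSuperclassFn (patternGroup F P) χ →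
      ∀ g ∈ patternGroup F R,
        SInd (patternGroup F R) (patternGroup F P) χ g =
          Ind (patternGroup F R) (patternGroup F P) χ g :=
  sind_eq_ind_of_coset_representatives_annihilating_general F P R hP hR hzero
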